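/- Define, for integers d₁,d₂,d₃, e₁,e₂,e₃, n₁,n₂,n₃ with d_i ≥ 2e_i ≥ 2 and n_i ≥ 1, the integer φ(d,e,n) := ∏_{i=1}^{3} C(d_i+n_i, n_i) − ∏_{i=1}^{3} C(d_i−2e_i+n_i, n_i) − ( ∏_{i=1}^{3} C(e_i+n_i, n_i) − 1 )·(n₁+n₂+n₃+1). Then φ(d,e,n) < 0 if and only if (d₁,d₂,d₃) = (2,2,2), (e₁,e₂,e₃) = (1,1,1), and, up to a permutation of the indices, (n₁,n₂,n₃) = (1,1,γ) with 1 ≤ γ ≤ 3. -/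
import Mathlib

set_option maxHeartbeats 2000000
set_option maxRecDepth 20000

/-- φ(d,e,n) = ∏ᵢ C(dᵢ+nᵢ,nᵢ) − ∏ᵢ C(dᵢ−2eᵢ+nᵢ,nᵢ)
    − (∏ᵢ C(eᵢ+nᵢ,nᵢ) − 1)(n₁+n₂+n₃+1), as an integer (three factors). -/
def phi3 (d₁ d₂ d₃ e₁ e₂ e₃ n₁ n₂ n₃ : ℕ) : ℤ :=
  ((d₁ + n₁).choose n₁ : ℤ) * ((d₂ + n₂).choose n₂ : ℤ) * ((d₃ + n₃).choose n₃ : ℤ)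
    - ((d₁ - 2 * e₁ + n₁).choose n₁ : ℤ) * ((d₂ - 2 * e₂ + n₂).choose n₂ : ℤ)
        * ((d₃ - 2 * e₃ + n₃).choose n₃ : ℤ)
    - (((e₁ + n₁).choose n₁ : ℤ) * ((e₂ + n₂).choose n₂ : ℤ) * ((e₃ + n₃).choose n₃ : ℤ) - 1)
        * ((n₁ : ℤ) + n₂ + n₃ + 1)




lemma Rgen (n a b : ℕ) (hnb : n ≤ b) (hba : b ≤ a)
    (h : (a+2-n)*(a+1-n)*(b+1) ≤ (a+1)*(a+2)*(b+1-n)) :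
    a.choose n * (b+1).choose n ≤ (a+2).choose n * b.choose n := by
  have hM : 0 < (a+1)*(a+2)*(b+1-n) := by
    have : 0 < b+1-n := by omega
    positivity
  apply Nat.le_of_mul_le_mul_right _ hM
  have key : a.choose n * (b+1).choose n * ((a+1)*(a+2)*(b+1-n))
      = (a+2).choose n * b.choose n * ((a+2-n)*(a+1-n)*(b+1)) := by
    have i1 := Nat.choose_mul_succ_eq a n
    have i2 := Nat.choose_mul_succ_eq (a+1) n
    have i3 := Nat.choose_mul_succ_eq b n
    zify [show n ≤ a+1 by omega, show n ≤ a+2 by omega, show n ≤ b+1 by omega] at i1 i2 i3 ⊢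
    linear_combination ((a:ℤ)+2)*((b+1).choose n)*((b:ℤ)+1-n)*i1
      + ((a:ℤ)+1-n)*((b+1).choose n)*((b:ℤ)+1-n)*i2
      - ((a+2).choose n : ℤ)*((a:ℤ)+2-n)*((a:ℤ)+1-n)*i3
  rw [key]
  exact Nat.mul_le_mul_left _ h

lemma two_choose (n : ℕ) : 2 * (n+2).choose n = (n+1)*(n+2) := by
  induction n with
  | zero => decide
  | succ k ih =>
    have h1 : (k+3).choose (k+1) = (k+2).choose k + (k+2).choose (k+1) :=
      Nat.choose_succ_succ (k+2) k
    have h2 : (k+2).choose (k+1) = k+2 := Nat.choose_succ_self_right (k+1)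
    have : 2 * (k+3).choose (k+1) = (k+1)*(k+2) + 2*(k+2) := by
      rw [h1, h2, Nat.mul_add, ih]
    rw [show k+1+2 = k+3 from rfl, this]; ring

lemma three_choose (n : ℕ) : 6 * (n+3).choose n = (n+1)*(n+2)*(n+3) := by
  induction n with
  | zero => decide
  | succ k ih =>
    have h1 : (k+4).choose (k+1) = (k+3).choose k + (k+3).choose (k+1) :=
      Nat.choose_succ_succ (k+3) k
    have h2 := two_choose (k+1)
    have : 6 * (k+4).choose (k+1) = (k+1)*(k+2)*(k+3) + 3*((k+2)*(k+3)) := by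
      rw [h1, Nat.mul_add, ih]
      have : 6 * (k+3).choose (k+1) = 3*((k+2)*(k+3)) := by
        rw [show (6:ℕ) = 3*2 by rfl, Nat.mul_assoc, show k+1+2=k+3 from rfl] at *
        rw [h2]
      omega
    rw [show k+1+3 = k+4 from rfl, this]; ring

lemma four_choose (n : ℕ) : 24 * (n+4).choose n = (n+1)*(n+2)*(n+3)*(n+4) := by
  induction n with
  | zero => decide
  | succ k ih =>
    have h1 : (k+5).choose (k+1) = (k+4).choose k + (k+4).choose (k+1) :=
      Nat.choose_succ_succ (k+4) k
    have h2 := three_choose (k+1)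
    have : 24 * (k+5).choose (k+1) = (k+1)*(k+2)*(k+3)*(k+4) + 4*((k+2)*(k+3)*(k+4)) := by
      rw [h1, Nat.mul_add, ih]
      have : 24 * (k+4).choose (k+1) = 4*((k+2)*(k+3)*(k+4)) := by
        calc 24 * (k+4).choose (k+1) = 4*(6*(k+1+3).choose (k+1)) := by ring_nf
          _ = 4*((k+1+1)*(k+1+2)*(k+1+3)) := by rw [h2]
          _ = 4*((k+2)*(k+3)*(k+4)) := by ring
      omega
    rw [show k+1+4 = k+5 from rfl, this]; ring

-- (iv): 2*C(2e+n,n) ≥ (n+2)*C(e+n,n) for e ≥ 1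
lemma ratio_top (e n : ℕ) (he : 1 ≤ e) :
    (n+2) * (e+n).choose n ≤ 2 * (2*e+n).choose n := by
  induction e with
  | zero => omega
  | succ f ih =>
    rcases Nat.eq_or_lt_of_le he with h1 | h1
    · -- f = 0, e = 1 : equality case
      have : f = 0 := by omega
      subst this
      have hs : (1+n).choose n = n+1 := by
        rw [Nat.add_comm]; exact Nat.choose_succ_self_right n
      rw [hs, show 2*1+n = n+2 by omega, two_choose]
      ring_nf; omega
    · have hf : 1 ≤ f := by omega
      have ihf := ih hf
      have hR := Rgen n (2*f+n) (f+n) (by omega) (by omega) (by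
        simp only [show 2*f+n+2-n = 2*f+2 by omega, show 2*f+n+1-n = 2*f+1 by omega,
          show f+n+1-n = f+1 by omega]
        nlinarith [sq_nonneg n, hf])
      -- hR : C(2f+n,n) * C(f+n+1,n) ≤ C(2f+n+2,n) * C(f+n,n)
      have hpos : 0 < (2*f+n).choose n := Nat.choose_pos (by omega)
      apply Nat.le_of_mul_le_mul_right _ hpos
      calc (n+2) * (f+1+n).choose n * (2*f+n).choose n
          = (n+2) * ((2*f+n).choose n * ((f+n)+1).choose n) := by ring_nf
        _ ≤ (n+2) * ((2*f+n+2).choose n * (f+n).choose n) :=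
            Nat.mul_le_mul_left _ hR
        _ = (2*f+n+2).choose n * ((n+2) * (f+n).choose n) := by ring
        _ ≤ (2*f+n+2).choose n * (2 * (2*f+n).choose n) :=
            Nat.mul_le_mul_left _ ihf
        _ = 2 * (2*(f+1)+n).choose n * (2*f+n).choose n := by
            rw [show 2*(f+1)+n = 2*f+n+2 by omega]; ring

-- (iii): 3*C(2e+k+1,k) ≥ (k+3)*C(e+k+1,k) for e ≥ 1
lemma ratio_sub (e k : ℕ) (he : 1 ≤ e) :
    (k+3) * (e+k+1).choose k ≤ 3 * (2*e+k+1).choose k := by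
  induction e with
  | zero => omega
  | succ f ih =>
    rcases Nat.eq_or_lt_of_le he with h1 | h1
    · have : f = 0 := by omega
      subst this
      -- (k+3)*C(k+2,k) ≤ 3*C(k+3,k), in fact equality after doubling
      have h2 := two_choose k
      have h3 := three_choose k
      have base : (k+3) * (k+2).choose k ≤ 3 * (k+3).choose k := by
        have hh : 2*((k+3) * (k+2).choose k) = 2*(3 * (k+3).choose k) := by
          calc 2*((k+3) * (k+2).choose k) = (k+3)*(2*(k+2).choose k) := by ring
            _ = (k+3)*((k+1)*(k+2)) := by rw [h2]
            _ = (k+1)*(k+2)*(k+3) := by ring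
            _ = 6 * (k+3).choose k := h3.symm
            _ = 2*(3*(k+3).choose k) := by ring
        omega
      rw [show (0:ℕ)+1+k+1 = k+2 from by omega, show 2*(0+1)+k+1 = k+3 from by omega]
      exact base
    · have hf : 1 ≤ f := by omega
      have ihf := ih hf
      have hR := Rgen k (2*f+k+1) (f+k+1) (by omega) (by omega) (by
        simp only [show 2*f+k+1+2-k = 2*f+3 by omega, show 2*f+k+1+1-k = 2*f+2 by omega,
          show f+k+1+1-k = f+2 by omega]
        nlinarith [sq_nonneg k, hf])
      have hpos : 0 < (2*f+k+1).choose k := Nat.choose_pos (by omega)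
      apply Nat.le_of_mul_le_mul_right _ hpos
      calc (k+3) * (f+1+k+1).choose k * (2*f+k+1).choose k
          = (k+3) * ((2*f+k+1).choose k * ((f+k+1)+1).choose k) := by ring_nf
        _ ≤ (k+3) * ((2*f+k+1+2).choose k * (f+k+1).choose k) :=
            Nat.mul_le_mul_left _ hR
        _ = (2*f+k+1+2).choose k * ((k+3) * (f+k+1).choose k) := by ring
        _ ≤ (2*f+k+1+2).choose k * (3 * (2*f+k+1).choose k) :=
            Nat.mul_le_mul_left _ ihf
        _ = 3 * (2*(f+1)+k+1).choose k * (2*f+k+1).choose k := by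
            rw [show 2*(f+1)+k+1 = 2*f+k+1+2 by omega]; ring

lemma phi3_comm12 (d₁ d₂ d₃ e₁ e₂ e₃ n₁ n₂ n₃ : ℕ) :
    phi3 d₁ d₂ d₃ e₁ e₂ e₃ n₁ n₂ n₃ = phi3 d₂ d₁ d₃ e₂ e₁ e₃ n₂ n₁ n₃ := by
  unfold phi3; ring

lemma phi3_comm13 (d₁ d₂ d₃ e₁ e₂ e₃ n₁ n₂ n₃ : ℕ) :
    phi3 d₁ d₂ d₃ e₁ e₂ e₃ n₁ n₂ n₃ = phi3 d₃ d₂ d₁ e₃ e₂ e₁ n₃ n₂ n₁ := by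
  unfold phi3; ring

lemma dmono1 (d₁ d₂ d₃ e₁ e₂ e₃ n₁ n₂ n₃ : ℕ) (hd₁ : 2*e₁ ≤ d₁) (hn₁ : 1 ≤ n₁) :
    phi3 d₁ d₂ d₃ e₁ e₂ e₃ n₁ n₂ n₃ ≤ phi3 (d₁+1) d₂ d₃ e₁ e₂ e₃ n₁ n₂ n₃ := by
  obtain ⟨m, rfl⟩ : ∃ m, n₁ = m+1 := ⟨n₁-1, by omega⟩
  have p1 : (d₁+1+(m+1)).choose (m+1)
      = (d₁+(m+1)).choose (m+1) + (d₁+(m+1)).choose m := by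
    rw [show d₁+1+(m+1) = (d₁+(m+1))+1 by omega, Nat.choose_succ_succ (d₁+(m+1)) m]
    simp only [Nat.succ_eq_add_one]; omega
  have p2 : ((d₁-2*e₁)+1+(m+1)).choose (m+1)
      = ((d₁-2*e₁)+(m+1)).choose (m+1) + ((d₁-2*e₁)+(m+1)).choose m := by
    rw [show (d₁-2*e₁)+1+(m+1) = ((d₁-2*e₁)+(m+1))+1 by omega,
      Nat.choose_succ_succ ((d₁-2*e₁)+(m+1)) m]
    simp only [Nat.succ_eq_add_one]; omega
  have key : ((d₁-2*e₁)+(m+1)).choose m * ((d₂-2*e₂+n₂).choose n₂ * ((d₃-2*e₃+n₃).choose n₃))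
      ≤ (d₁+(m+1)).choose m * ((d₂+n₂).choose n₂ * ((d₃+n₃).choose n₃)) := by
    apply Nat.mul_le_mul (Nat.choose_le_choose _ (by omega))
    exact Nat.mul_le_mul (Nat.choose_le_choose _ (by omega))
      (Nat.choose_le_choose _ (by omega))
  unfold phi3
  rw [show d₁+1-2*e₁ = (d₁-2*e₁)+1 by omega]
  have p1' : ((d₁+1+(m+1)).choose (m+1) : ℤ)
      = ((d₁+(m+1)).choose (m+1) : ℤ) + ((d₁+(m+1)).choose m : ℤ) := by exact_mod_cast p1
  have p2' : (((d₁-2*e₁)+1+(m+1)).choose (m+1) : ℤ)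
      = (((d₁-2*e₁)+(m+1)).choose (m+1) : ℤ) + (((d₁-2*e₁)+(m+1)).choose m : ℤ) := by
    exact_mod_cast p2
  have key' : (((d₁-2*e₁)+(m+1)).choose m : ℤ) * ((d₂-2*e₂+n₂).choose n₂ * ((d₃-2*e₃+n₃).choose n₃))
      ≤ ((d₁+(m+1)).choose m : ℤ) * ((d₂+n₂).choose n₂ * ((d₃+n₃).choose n₃)) := by
    exact_mod_cast key
  rw [p1', p2']
  push_cast
  nlinarith [key']

set_option maxHeartbeats 1000000 in
lemma emono1 (e₁ e₂ e₃ d₂ d₃ n₁ n₂ n₃ : ℕ) (he₁ : 1 ≤ e₁) (he₂ : 1 ≤ e₂) (he₃ : 1 ≤ e₃)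
    (hd₂ : 2*e₂ ≤ d₂) (hd₃ : 2*e₃ ≤ d₃) (hn₁ : 1 ≤ n₁) (hn₂ : 1 ≤ n₂) (hn₃ : 1 ≤ n₃) :
    phi3 (2*e₁) d₂ d₃ e₁ e₂ e₃ n₁ n₂ n₃ ≤ phi3 (2*e₁+2) d₂ d₃ (e₁+1) e₂ e₃ n₁ n₂ n₃ := by
  obtain ⟨m, rfl⟩ : ∃ m, n₁ = m+1 := ⟨n₁-1, by omega⟩
  obtain ⟨b, rfl⟩ : ∃ b, n₂ = b+1 := ⟨n₂-1, by omega⟩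
  obtain ⟨c, rfl⟩ : ∃ c, n₃ = c+1 := ⟨n₃-1, by omega⟩
  have c1 : (m+3) * (e₁+(m+1)).choose m ≤ 3 * (2*e₁+(m+1)).choose m := by
    have h := ratio_sub e₁ m he₁
    rw [show e₁+(m+1) = e₁+m+1 by omega, show 2*e₁+(m+1) = 2*e₁+m+1 by omega]; exact h
  have c2 : ((b+1)+2) * (e₂+(b+1)).choose (b+1) ≤ 2 * (d₂+(b+1)).choose (b+1) :=
    le_trans (ratio_top e₂ (b+1) he₂) (Nat.mul_le_mul_left 2 (Nat.choose_le_choose _ (by omega)))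
  have c3 : ((c+1)+2) * (e₃+(c+1)).choose (c+1) ≤ 2 * (d₃+(c+1)).choose (c+1) :=
    le_trans (ratio_top e₃ (c+1) he₃) (Nat.mul_le_mul_left 2 (Nat.choose_le_choose _ (by omega)))
  have c0 : 6*((m+1)+(b+1)+(c+1)+1) ≤ (m+3)*(((b+1)+2)*((c+1)+2)) := by
    have he : (m+3)*(((b+1)+2)*((c+1)+2))
        = 6*((m+1)+(b+1)+(c+1)+1)
          + (m*b*c + 3*(m*b) + 3*(m*c) + 3*(b*c) + 3*m+3*b+3*c+3) := by ring
    linarith [Nat.zero_le (m*b*c + 3*(m*b) + 3*(m*c) + 3*(b*c) + 3*m+3*b+3*c+3)]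
  have p1 : (2*e₁+(m+1)).choose (m+1) + 2*((2*e₁+(m+1)).choose m)
      ≤ (2*e₁+2+(m+1)).choose (m+1) := by
    have s1 : (2*e₁+2+(m+1)).choose (m+1)
        = (2*e₁+1+(m+1)).choose m + (2*e₁+1+(m+1)).choose (m+1) := by
      rw [show 2*e₁+2+(m+1) = (2*e₁+1+(m+1))+1 by omega, Nat.choose_succ_succ]
    have s2 : (2*e₁+1+(m+1)).choose (m+1)
        = (2*e₁+(m+1)).choose m + (2*e₁+(m+1)).choose (m+1) := by
      rw [show 2*e₁+1+(m+1) = (2*e₁+(m+1))+1 by omega, Nat.choose_succ_succ]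
    have mono : (2*e₁+(m+1)).choose m ≤ (2*e₁+1+(m+1)).choose m :=
      Nat.choose_le_choose _ (by omega)
    omega
  have p2 : (e₁+1+(m+1)).choose (m+1)
      = (e₁+(m+1)).choose (m+1) + (e₁+(m+1)).choose m := by
    rw [show e₁+1+(m+1) = (e₁+(m+1))+1 by omega, Nat.choose_succ_succ]
    simp only [Nat.succ_eq_add_one]; omega
  have main : ((m+1)+(b+1)+(c+1)+1) * ((e₁+(m+1)).choose m * ((e₂+(b+1)).choose (b+1) * (e₃+(c+1)).choose (c+1)))
      ≤ 2*((2*e₁+(m+1)).choose m) * ((d₂+(b+1)).choose (b+1) * (d₃+(c+1)).choose (c+1)) := by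
    apply Nat.le_of_mul_le_mul_left _ (show 0 < 12 by norm_num)
    calc 12 * (((m+1)+(b+1)+(c+1)+1) * ((e₁+(m+1)).choose m * ((e₂+(b+1)).choose (b+1) * (e₃+(c+1)).choose (c+1))))
        = (6*((m+1)+(b+1)+(c+1)+1)) * ((e₁+(m+1)).choose m * ((e₂+(b+1)).choose (b+1) * (e₃+(c+1)).choose (c+1))) * 2 := by
          ring
      _ ≤ ((m+3)*(((b+1)+2)*((c+1)+2))) * ((e₁+(m+1)).choose m * ((e₂+(b+1)).choose (b+1) * (e₃+(c+1)).choose (c+1))) * 2 := by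
          gcongr
      _ = ((m+3)*(e₁+(m+1)).choose m) * ((((b+1)+2)*(e₂+(b+1)).choose (b+1)) * ((((c+1)+2))*(e₃+(c+1)).choose (c+1))) * 2 := by
          ring
      _ ≤ (3*(2*e₁+(m+1)).choose m) * ((2*(d₂+(b+1)).choose (b+1)) * (2*(d₃+(c+1)).choose (c+1))) * 2 := by
          gcongr
      _ = 12 * (2*((2*e₁+(m+1)).choose m) * ((d₂+(b+1)).choose (b+1) * (d₃+(c+1)).choose (c+1))) := by
          ring
  unfold phi3
  rw [show 2*e₁+2 - 2*(e₁+1) + (m+1) = 2*e₁ - 2*e₁ + (m+1) by omega]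
  have q1 : ((2*e₁+(m+1)).choose (m+1) : ℤ) + 2*((2*e₁+(m+1)).choose m : ℤ)
      ≤ ((2*e₁+2+(m+1)).choose (m+1) : ℤ) := by exact_mod_cast p1
  have q2 : ((e₁+1+(m+1)).choose (m+1) : ℤ)
      = ((e₁+(m+1)).choose (m+1) : ℤ) + ((e₁+(m+1)).choose m : ℤ) := by exact_mod_cast p2
  have q3 : (((m:ℤ)+1)+((b:ℤ)+1)+((c:ℤ)+1)+1) * ((e₁+(m+1)).choose m * ((e₂+(b+1)).choose (b+1) * ((e₃+(c+1)).choose (c+1) : ℤ)))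
      ≤ 2*((2*e₁+(m+1)).choose m : ℤ) * ((d₂+(b+1)).choose (b+1) * ((d₃+(c+1)).choose (c+1) : ℤ)) := by
    exact_mod_cast main
  rw [q2]
  push_cast
  nlinarith [q3, mul_le_mul_of_nonneg_right q1
    (mul_nonneg (Int.natCast_nonneg ((d₂+(b+1)).choose (b+1))) (Int.natCast_nonneg ((d₃+(c+1)).choose (c+1))))]

lemma two_chooseZ (n : ℕ) : (2:ℤ) * ((n+2).choose n : ℤ) = ((n:ℤ)+1)*((n:ℤ)+2) := by
  exact_mod_cast two_choose n
lemma three_chooseZ (n : ℕ) : (6:ℤ) * ((n+3).choose n : ℤ) = ((n:ℤ)+1)*((n:ℤ)+2)*((n:ℤ)+3) := by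
  exact_mod_cast three_choose n
lemma four_chooseZ (n : ℕ) :
    (24:ℤ) * ((n+4).choose n : ℤ) = ((n:ℤ)+1)*((n:ℤ)+2)*((n:ℤ)+3)*((n:ℤ)+4) := by
  exact_mod_cast four_choose n

lemma keyA (x y z : ℕ) : (8:ℤ) * phi3 2 2 2 1 1 1 x y z
    = ((x:ℤ)+1)*((x:ℤ)+2)*(((y:ℤ)+1)*((y:ℤ)+2))*(((z:ℤ)+1)*((z:ℤ)+2)) - 8
      - 8*(((x:ℤ)+1)*(((y:ℤ)+1)*((z:ℤ)+1)) - 1)*((x:ℤ)+(y:ℤ)+(z:ℤ)+1) := by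
  unfold phi3
  rw [show (2:ℕ)-2*1+x = x by omega, show (2:ℕ)-2*1+y = y by omega,
    show (2:ℕ)-2*1+z = z by omega, Nat.choose_self, Nat.choose_self, Nat.choose_self,
    show (2:ℕ)+x = x+2 by omega, show (2:ℕ)+y = y+2 by omega, show (2:ℕ)+z = z+2 by omega,
    show (1:ℕ)+x = x+1 by omega, show (1:ℕ)+y = y+1 by omega, show (1:ℕ)+z = z+1 by omega,
    Nat.choose_succ_self_right, Nat.choose_succ_self_right, Nat.choose_succ_self_right]
  push_cast
  linear_combination (4*((y+2).choose y : ℤ)*((z+2).choose z : ℤ)) * two_chooseZ x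
    + (2*((x:ℤ)+1)*((x:ℤ)+2)*((z+2).choose z : ℤ)) * two_chooseZ y
    + (((x:ℤ)+1)*((x:ℤ)+2)*((y:ℤ)+1)*((y:ℤ)+2)) * two_chooseZ z

lemma keyB (x y z : ℕ) : (24:ℤ) * phi3 3 2 2 1 1 1 x y z
    = ((x:ℤ)+1)*((x:ℤ)+2)*((x:ℤ)+3)*(((y:ℤ)+1)*((y:ℤ)+2))*(((z:ℤ)+1)*((z:ℤ)+2))
      - 24*((x:ℤ)+1)
      - 24*(((x:ℤ)+1)*(((y:ℤ)+1)*((z:ℤ)+1)) - 1)*((x:ℤ)+(y:ℤ)+(z:ℤ)+1) := by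
  unfold phi3
  rw [show (3:ℕ)-2*1+x = 1+x by omega, show (2:ℕ)-2*1+y = y by omega,
    show (2:ℕ)-2*1+z = z by omega, Nat.choose_self, Nat.choose_self,
    show (3:ℕ)+x = x+3 by omega, show (2:ℕ)+y = y+2 by omega, show (2:ℕ)+z = z+2 by omega,
    show (1:ℕ)+x = x+1 by omega, show (1:ℕ)+y = y+1 by omega, show (1:ℕ)+z = z+1 by omega,
    Nat.choose_succ_self_right, Nat.choose_succ_self_right, Nat.choose_succ_self_right]
  push_cast
  linear_combination (4*((y+2).choose y : ℤ)*((z+2).choose z : ℤ)) * three_chooseZ x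
    + (2*((x:ℤ)+1)*((x:ℤ)+2)*((x:ℤ)+3)*((z+2).choose z : ℤ)) * two_chooseZ y
    + (((x:ℤ)+1)*((x:ℤ)+2)*((x:ℤ)+3)*((y:ℤ)+1)*((y:ℤ)+2)) * two_chooseZ z

lemma keyC (x y z : ℕ) : (96:ℤ) * phi3 4 2 2 2 1 1 x y z
    = ((x:ℤ)+1)*((x:ℤ)+2)*((x:ℤ)+3)*((x:ℤ)+4)*(((y:ℤ)+1)*((y:ℤ)+2))*(((z:ℤ)+1)*((z:ℤ)+2))
      - 96
      - (48*((x:ℤ)+1)*((x:ℤ)+2)*(((y:ℤ)+1)*((z:ℤ)+1)) - 96)*((x:ℤ)+(y:ℤ)+(z:ℤ)+1) := by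
  unfold phi3
  rw [show (4:ℕ)-2*2+x = x by omega, show (2:ℕ)-2*1+y = y by omega,
    show (2:ℕ)-2*1+z = z by omega, Nat.choose_self, Nat.choose_self, Nat.choose_self,
    show (4:ℕ)+x = x+4 by omega, show (2:ℕ)+y = y+2 by omega, show (2:ℕ)+z = z+2 by omega,
    show (2:ℕ)+x = x+2 by omega,
    show (1:ℕ)+y = y+1 by omega, show (1:ℕ)+z = z+1 by omega,
    Nat.choose_succ_self_right, Nat.choose_succ_self_right]
  push_cast
  linear_combination (4*((y+2).choose y : ℤ)*((z+2).choose z : ℤ)) * four_chooseZ x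
    + (2*((x:ℤ)+1)*((x:ℤ)+2)*((x:ℤ)+3)*((x:ℤ)+4)*((z+2).choose z : ℤ)) * two_chooseZ y
    + (((x:ℤ)+1)*((x:ℤ)+2)*((x:ℤ)+3)*((x:ℤ)+4)*((y:ℤ)+1)*((y:ℤ)+2)) * two_chooseZ z
    + (-48*((y:ℤ)+1)*((z:ℤ)+1)*((x:ℤ)+(y:ℤ)+(z:ℤ)+1)) * two_chooseZ x

lemma caseB (x y z : ℕ) (hx : 1 ≤ x) (hy : 1 ≤ y) (hz : 1 ≤ z) :
    0 ≤ phi3 3 2 2 1 1 1 x y z := by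
  obtain ⟨a, rfl⟩ : ∃ a, x = a+1 := ⟨x-1, by omega⟩
  obtain ⟨b, rfl⟩ : ∃ b, y = b+1 := ⟨y-1, by omega⟩
  obtain ⟨c, rfl⟩ : ∃ c, z = c+1 := ⟨z-1, by omega⟩
  have k := keyB (a+1) (b+1) (c+1)
  push_cast at k
  have pos : (0:ℤ) ≤ 144 + 168*(c:ℤ) + 48*(c:ℤ)*(c:ℤ) + 168*(b:ℤ) + 216*(b:ℤ)*(c:ℤ) + 72*(b:ℤ)*(c:ℤ)*(c:ℤ) + 48*(b:ℤ)*(b:ℤ) + 72*(b:ℤ)*(b:ℤ)*(c:ℤ) + 24*(b:ℤ)*(b:ℤ)*(c:ℤ)*(c:ℤ) + 360*(a:ℤ) + 396*(a:ℤ)*(c:ℤ) + 108*(a:ℤ)*(c:ℤ)*(c:ℤ) + 396*(a:ℤ)*(b:ℤ) + 410*(a:ℤ)*(b:ℤ)*(c:ℤ) + 106*(a:ℤ)*(b:ℤ)*(c:ℤ)*(c:ℤ) + 108*(a:ℤ)*(b:ℤ)*(b:ℤ) + 106*(a:ℤ)*(b:ℤ)*(b:ℤ)*(c:ℤ) + 26*(a:ℤ)*(b:ℤ)*(b:ℤ)*(c:ℤ)*(c:ℤ)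 + 228*(a:ℤ)*(a:ℤ) + 222*(a:ℤ)*(a:ℤ)*(c:ℤ) + 54*(a:ℤ)*(a:ℤ)*(c:ℤ)*(c:ℤ) + 222*(a:ℤ)*(a:ℤ)*(b:ℤ) + 201*(a:ℤ)*(a:ℤ)*(b:ℤ)*(c:ℤ) + 45*(a:ℤ)*(a:ℤ)*(b:ℤ)*(c:ℤ)*(c:ℤ) + 54*(a:ℤ)*(a:ℤ)*(b:ℤ)*(b:ℤ) + 45*(a:ℤ)*(a:ℤ)*(b:ℤ)*(b:ℤ)*(c:ℤ) + 9*(a:ℤ)*(a:ℤ)*(b:ℤ)*(b:ℤ)*(c:ℤ)*(c:ℤ) + 36*(a:ℤ)*(a:ℤ)*(a:ℤ) + 30*(a:ℤ)*(a:ℤ)*(a:ℤ)*(c:ℤ) + 6*(a:ℤ)*(a:ℤ)*(a:ℤ)*(c:ℤ)*(c:ℤ) + 30*(a:ℤ)*(a:ℤ)*(a:ℤ)*(b:ℤ) + 25*(a:ℤ)*(a:ℤ)*(a:ℤ)*(b:ℤ)*(c:ℤ) + 5*(a:ℤ)*(a:ℤ)*(a:ℤ)*(b:ℤ)*(c:ℤ)*(c:ℤ)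 + 6*(a:ℤ)*(a:ℤ)*(a:ℤ)*(b:ℤ)*(b:ℤ) + 5*(a:ℤ)*(a:ℤ)*(a:ℤ)*(b:ℤ)*(b:ℤ)*(c:ℤ) + 1*(a:ℤ)*(a:ℤ)*(a:ℤ)*(b:ℤ)*(b:ℤ)*(c:ℤ)*(c:ℤ) := by positivity
  linarith

lemma caseC (x y z : ℕ) (hx : 1 ≤ x) (hy : 1 ≤ y) (hz : 1 ≤ z) :
    0 ≤ phi3 4 2 2 2 1 1 x y z := by
  obtain ⟨a, rfl⟩ : ∃ a, x = a+1 := ⟨x-1, by omega⟩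
  obtain ⟨b, rfl⟩ : ∃ b, y = b+1 := ⟨y-1, by omega⟩
  obtain ⟨c, rfl⟩ : ∃ c, z = c+1 := ⟨z-1, by omega⟩
  have k := keyC (a+1) (b+1) (c+1)
  push_cast at k
  have pos : (0:ℤ) ≤ 240*(c:ℤ) + 144*(c:ℤ)*(c:ℤ) + 240*(b:ℤ) + 696*(b:ℤ)*(c:ℤ) + 312*(b:ℤ)*(c:ℤ)*(c:ℤ) + 144*(b:ℤ)*(b:ℤ) + 312*(b:ℤ)*(b:ℤ)*(c:ℤ) + 120*(b:ℤ)*(b:ℤ)*(c:ℤ)*(c:ℤ) + 648*(a:ℤ) + 1164*(a:ℤ)*(c:ℤ) + 444*(a:ℤ)*(c:ℤ)*(c:ℤ) + 1164*(a:ℤ)*(b:ℤ) + 1642*(a:ℤ)*(b:ℤ)*(c:ℤ) + 530*(a:ℤ)*(b:ℤ)*(c:ℤ)*(c:ℤ) + 444*(a:ℤ)*(b:ℤ)*(b:ℤ) + 530*(a:ℤ)*(b:ℤ)*(b:ℤ)*(c:ℤ) + 154*(a:ℤ)*(b:ℤ)*(b:ℤ)*(c:ℤ)*(c:ℤ) +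 828*(a:ℤ)*(a:ℤ) + 1074*(a:ℤ)*(a:ℤ)*(c:ℤ) + 330*(a:ℤ)*(a:ℤ)*(c:ℤ)*(c:ℤ) + 1074*(a:ℤ)*(a:ℤ)*(b:ℤ) + 1151*(a:ℤ)*(a:ℤ)*(b:ℤ)*(c:ℤ) + 307*(a:ℤ)*(a:ℤ)*(b:ℤ)*(c:ℤ)*(c:ℤ) + 330*(a:ℤ)*(a:ℤ)*(b:ℤ)*(b:ℤ) + 307*(a:ℤ)*(a:ℤ)*(b:ℤ)*(b:ℤ)*(c:ℤ) + 71*(a:ℤ)*(a:ℤ)*(b:ℤ)*(b:ℤ)*(c:ℤ)*(c:ℤ) + 312*(a:ℤ)*(a:ℤ)*(a:ℤ) + 324*(a:ℤ)*(a:ℤ)*(a:ℤ)*(c:ℤ) + 84*(a:ℤ)*(a:ℤ)*(a:ℤ)*(c:ℤ)*(c:ℤ) + 324*(a:ℤ)*(a:ℤ)*(a:ℤ)*(b:ℤ) + 302*(a:ℤ)*(a:ℤ)*(a:ℤ)*(b:ℤ)*(c:ℤ) + 70*(a:ℤ)*(a:ℤ)*(a:ℤ)*(b:ℤ)*(c:ℤ)*(c:ℤ)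 + 84*(a:ℤ)*(a:ℤ)*(a:ℤ)*(b:ℤ)*(b:ℤ) + 70*(a:ℤ)*(a:ℤ)*(a:ℤ)*(b:ℤ)*(b:ℤ)*(c:ℤ) + 14*(a:ℤ)*(a:ℤ)*(a:ℤ)*(b:ℤ)*(b:ℤ)*(c:ℤ)*(c:ℤ) + 36*(a:ℤ)*(a:ℤ)*(a:ℤ)*(a:ℤ) + 30*(a:ℤ)*(a:ℤ)*(a:ℤ)*(a:ℤ)*(c:ℤ) + 6*(a:ℤ)*(a:ℤ)*(a:ℤ)*(a:ℤ)*(c:ℤ)*(c:ℤ) + 30*(a:ℤ)*(a:ℤ)*(a:ℤ)*(a:ℤ)*(b:ℤ) + 25*(a:ℤ)*(a:ℤ)*(a:ℤ)*(a:ℤ)*(b:ℤ)*(c:ℤ) + 5*(a:ℤ)*(a:ℤ)*(a:ℤ)*(a:ℤ)*(b:ℤ)*(c:ℤ)*(c:ℤ) + 6*(a:ℤ)*(a:ℤ)*(a:ℤ)*(a:ℤ)*(b:ℤ)*(b:ℤ) + 5*(a:ℤ)*(a:ℤ)*(a:ℤ)*(a:ℤ)*(b:ℤ)*(b:ℤ)*(c:ℤ)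 + 1*(a:ℤ)*(a:ℤ)*(a:ℤ)*(a:ℤ)*(b:ℤ)*(b:ℤ)*(c:ℤ)*(c:ℤ) := by positivity
  linarith

lemma caseA (x y z : ℕ) (hx : 1 ≤ x) (hy : 1 ≤ y) (hz : 1 ≤ z) :
    phi3 2 2 2 1 1 1 x y z < 0 ↔
      ((x = 1 ∧ y = 1 ∧ z ≤ 3) ∨ (x = 1 ∧ z = 1 ∧ y ≤ 3) ∨ (y = 1 ∧ z = 1 ∧ x ≤ 3)) := by
  constructor
  · intro h
    have fxy : ¬(2 ≤ x ∧ 2 ≤ y) := by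
      rintro ⟨h2x, h2y⟩
      obtain ⟨a, rfl⟩ : ∃ a, x = a+2 := ⟨x-2, by omega⟩
      obtain ⟨b, rfl⟩ : ∃ b, y = b+2 := ⟨y-2, by omega⟩
      obtain ⟨c, rfl⟩ : ∃ c, z = c+1 := ⟨z-1, by omega⟩
      have k := keyA (a+2) (b+2) (c+1)
      push_cast at k
      have pos : (0:ℤ) ≤ 40 + 152*(c:ℤ) + 72*(c:ℤ)*(c:ℤ) + 80*(b:ℤ) + 156*(b:ℤ)*(c:ℤ) + 60*(b:ℤ)*(c:ℤ)*(c:ℤ) + 24*(b:ℤ)*(b:ℤ) + 36*(b:ℤ)*(b:ℤ)*(c:ℤ) + 12*(b:ℤ)*(b:ℤ)*(c:ℤ)*(c:ℤ) + 80*(a:ℤ) + 156*(a:ℤ)*(c:ℤ) + 60*(a:ℤ)*(c:ℤ)*(c:ℤ) + 102*(a:ℤ)*(b:ℤ) + 133*(a:ℤ)*(b:ℤ)*(c:ℤ) + 41*(a:ℤ)*(b:ℤ)*(c:ℤ)*(c:ℤ) + 26*(a:ℤ)*(b:ℤ)*(b:ℤ) + 27*(a:ℤ)*(b:ℤ)*(b:ℤ)*(c:ℤ)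 + 7*(a:ℤ)*(b:ℤ)*(b:ℤ)*(c:ℤ)*(c:ℤ) + 24*(a:ℤ)*(a:ℤ) + 36*(a:ℤ)*(a:ℤ)*(c:ℤ) + 12*(a:ℤ)*(a:ℤ)*(c:ℤ)*(c:ℤ) + 26*(a:ℤ)*(a:ℤ)*(b:ℤ) + 27*(a:ℤ)*(a:ℤ)*(b:ℤ)*(c:ℤ) + 7*(a:ℤ)*(a:ℤ)*(b:ℤ)*(c:ℤ)*(c:ℤ) + 6*(a:ℤ)*(a:ℤ)*(b:ℤ)*(b:ℤ) + 5*(a:ℤ)*(a:ℤ)*(b:ℤ)*(b:ℤ)*(c:ℤ) + 1*(a:ℤ)*(a:ℤ)*(b:ℤ)*(b:ℤ)*(c:ℤ)*(c:ℤ) := by positivity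
      linarith
    have fxz : ¬(2 ≤ x ∧ 2 ≤ z) := by
      rintro ⟨h2x, h2z⟩
      obtain ⟨a, rfl⟩ : ∃ a, x = a+2 := ⟨x-2, by omega⟩
      obtain ⟨b, rfl⟩ : ∃ b, y = b+1 := ⟨y-1, by omega⟩
      obtain ⟨c, rfl⟩ : ∃ c, z = c+2 := ⟨z-2, by omega⟩
      have k := keyA (a+2) (b+1) (c+2)
      push_cast at k
      have pos : (0:ℤ) ≤ 40 + 80*(c:ℤ) + 24*(c:ℤ)*(c:ℤ) + 152*(b:ℤ) + 156*(b:ℤ)*(c:ℤ) + 36*(b:ℤ)*(c:ℤ)*(c:ℤ) + 72*(b:ℤ)*(b:ℤ) + 60*(b:ℤ)*(b:ℤ)*(c:ℤ) + 12*(b:ℤ)*(b:ℤ)*(c:ℤ)*(c:ℤ) + 80*(a:ℤ) + 102*(a:ℤ)*(c:ℤ) + 26*(a:ℤ)*(c:ℤ)*(c:ℤ) + 156*(a:ℤ)*(b:ℤ) + 133*(a:ℤ)*(b:ℤ)*(c:ℤ) + 27*(a:ℤ)*(b:ℤ)*(c:ℤ)*(c:ℤ) + 60*(a:ℤ)*(b:ℤ)*(b:ℤ)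 + 41*(a:ℤ)*(b:ℤ)*(b:ℤ)*(c:ℤ) + 7*(a:ℤ)*(b:ℤ)*(b:ℤ)*(c:ℤ)*(c:ℤ) + 24*(a:ℤ)*(a:ℤ) + 26*(a:ℤ)*(a:ℤ)*(c:ℤ) + 6*(a:ℤ)*(a:ℤ)*(c:ℤ)*(c:ℤ) + 36*(a:ℤ)*(a:ℤ)*(b:ℤ) + 27*(a:ℤ)*(a:ℤ)*(b:ℤ)*(c:ℤ) + 5*(a:ℤ)*(a:ℤ)*(b:ℤ)*(c:ℤ)*(c:ℤ) + 12*(a:ℤ)*(a:ℤ)*(b:ℤ)*(b:ℤ) + 7*(a:ℤ)*(a:ℤ)*(b:ℤ)*(b:ℤ)*(c:ℤ) + 1*(a:ℤ)*(a:ℤ)*(b:ℤ)*(b:ℤ)*(c:ℤ)*(c:ℤ) := by positivity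
      linarith
    have fyz : ¬(2 ≤ y ∧ 2 ≤ z) := by
      rintro ⟨h2y, h2z⟩
      obtain ⟨a, rfl⟩ : ∃ a, x = a+1 := ⟨x-1, by omega⟩
      obtain ⟨b, rfl⟩ : ∃ b, y = b+2 := ⟨y-2, by omega⟩
      obtain ⟨c, rfl⟩ : ∃ c, z = c+2 := ⟨z-2, by omega⟩
      have k := keyA (a+1) (b+2) (c+2)
      push_cast at k
      have pos : (0:ℤ) ≤ 40 + 80*(c:ℤ) + 24*(c:ℤ)*(c:ℤ) + 80*(b:ℤ) + 102*(b:ℤ)*(c:ℤ) + 26*(b:ℤ)*(c:ℤ)*(c:ℤ) + 24*(b:ℤ)*(b:ℤ) + 26*(b:ℤ)*(b:ℤ)*(c:ℤ) + 6*(b:ℤ)*(b:ℤ)*(c:ℤ)*(c:ℤ) + 152*(a:ℤ) + 156*(a:ℤ)*(c:ℤ) + 36*(a:ℤ)*(c:ℤ)*(c:ℤ) + 156*(a:ℤ)*(b:ℤ) + 133*(a:ℤ)*(b:ℤ)*(c:ℤ) + 27*(a:ℤ)*(b:ℤ)*(c:ℤ)*(c:ℤ) + 36*(a:ℤ)*(b:ℤ)*(b:ℤ)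 + 27*(a:ℤ)*(b:ℤ)*(b:ℤ)*(c:ℤ) + 5*(a:ℤ)*(b:ℤ)*(b:ℤ)*(c:ℤ)*(c:ℤ) + 72*(a:ℤ)*(a:ℤ) + 60*(a:ℤ)*(a:ℤ)*(c:ℤ) + 12*(a:ℤ)*(a:ℤ)*(c:ℤ)*(c:ℤ) + 60*(a:ℤ)*(a:ℤ)*(b:ℤ) + 41*(a:ℤ)*(a:ℤ)*(b:ℤ)*(c:ℤ) + 7*(a:ℤ)*(a:ℤ)*(b:ℤ)*(c:ℤ)*(c:ℤ) + 12*(a:ℤ)*(a:ℤ)*(b:ℤ)*(b:ℤ) + 7*(a:ℤ)*(a:ℤ)*(b:ℤ)*(b:ℤ)*(c:ℤ) + 1*(a:ℤ)*(a:ℤ)*(b:ℤ)*(b:ℤ)*(c:ℤ)*(c:ℤ) := by positivity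
      linarith
    have f11z : ¬(x = 1 ∧ y = 1 ∧ 4 ≤ z) := by
      rintro ⟨rfl, rfl, h4⟩
      obtain ⟨c, rfl⟩ : ∃ c, z = c+4 := ⟨z-4, by omega⟩
      have k := keyA 1 1 (c+4)
      push_cast at k
      have pos : (0:ℤ) ≤ 8 + 20*(c:ℤ) + 4*(c:ℤ)*(c:ℤ) := by positivity
      linarith
    have f1y1 : ¬(x = 1 ∧ z = 1 ∧ 4 ≤ y) := by
      rintro ⟨rfl, rfl, h4⟩
      obtain ⟨b, rfl⟩ : ∃ b, y = b+4 := ⟨y-4, by omega⟩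
      have k := keyA 1 (b+4) 1
      push_cast at k
      have pos : (0:ℤ) ≤ 8 + 20*(b:ℤ) + 4*(b:ℤ)*(b:ℤ) := by positivity
      linarith
    have fx11 : ¬(y = 1 ∧ z = 1 ∧ 4 ≤ x) := by
      rintro ⟨rfl, rfl, h4⟩
      obtain ⟨a, rfl⟩ : ∃ a, x = a+4 := ⟨x-4, by omega⟩
      have k := keyA (a+4) 1 1
      push_cast at k
      have pos : (0:ℤ) ≤ 8 + 20*(a:ℤ) + 4*(a:ℤ)*(a:ℤ) := by positivity
      linarith
    omega
  · rintro (⟨rfl, rfl, h3⟩ | ⟨rfl, rfl, h3⟩ | ⟨rfl, rfl, h3⟩)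
    · interval_cases z <;> decide
    · interval_cases y <;> decide
    · interval_cases x <;> decide

lemma dmono_chain (D d₁ d₂ d₃ e₁ e₂ e₃ n₁ n₂ n₃ : ℕ) (hD : 2*e₁ ≤ D) (h : D ≤ d₁)
    (hn₁ : 1 ≤ n₁) :
    phi3 D d₂ d₃ e₁ e₂ e₃ n₁ n₂ n₃ ≤ phi3 d₁ d₂ d₃ e₁ e₂ e₃ n₁ n₂ n₃ := by
  induction d₁, h using Nat.le_induction with
  | base => exact le_refl _
  | succ k hk ih => exact ih.trans (dmono1 k d₂ d₃ e₁ e₂ e₃ n₁ n₂ n₃ (by omega) hn₁)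

lemma emono_chain (E e₁ e₂ e₃ d₂ d₃ n₁ n₂ n₃ : ℕ) (hE : 1 ≤ E) (h : E ≤ e₁)
    (he₂ : 1 ≤ e₂) (he₃ : 1 ≤ e₃) (hd₂ : 2*e₂ ≤ d₂) (hd₃ : 2*e₃ ≤ d₃)
    (hn₁ : 1 ≤ n₁) (hn₂ : 1 ≤ n₂) (hn₃ : 1 ≤ n₃) :
    phi3 (2*E) d₂ d₃ E e₂ e₃ n₁ n₂ n₃ ≤ phi3 (2*e₁) d₂ d₃ e₁ e₂ e₃ n₁ n₂ n₃ := by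
  induction e₁, h using Nat.le_induction with
  | base => exact le_refl _
  | succ k hk ih =>
      have step := emono1 k e₂ e₃ d₂ d₃ n₁ n₂ n₃ (by omega) he₂ he₃ hd₂ hd₃ hn₁ hn₂ hn₃
      rw [show 2*(k+1) = 2*k+2 by omega]
      exact ih.trans step

lemma master_e (d₁ d₂ d₃ e₁ e₂ e₃ n₁ n₂ n₃ : ℕ) (h2 : 2 ≤ e₁) (he₂ : 1 ≤ e₂) (he₃ : 1 ≤ e₃)
    (hd₁ : 2*e₁ ≤ d₁) (hd₂ : 2*e₂ ≤ d₂) (hd₃ : 2*e₃ ≤ d₃)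
    (hn₁ : 1 ≤ n₁) (hn₂ : 1 ≤ n₂) (hn₃ : 1 ≤ n₃) :
    0 ≤ phi3 d₁ d₂ d₃ e₁ e₂ e₃ n₁ n₂ n₃ := by
  have s0 : (0:ℤ) ≤ phi3 4 2 2 2 1 1 n₁ n₂ n₃ := caseC n₁ n₂ n₃ hn₁ hn₂ hn₃
  have s1 : phi3 (2*2) (2*1) (2*1) 2 1 1 n₁ n₂ n₃ = phi3 4 2 2 2 1 1 n₁ n₂ n₃ := by norm_num
  -- raise e₃ from 1 to e₃ (coordinate 3)
  have t3 : phi3 (2*2) (2*1) (2*1) 2 1 1 n₁ n₂ n₃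
      ≤ phi3 (2*2) (2*1) (2*e₃) 2 1 e₃ n₁ n₂ n₃ := by
    have h := emono_chain 1 e₃ 1 2 (2*1) (2*2) n₃ n₂ n₁ le_rfl he₃ (by omega) (by omega)
      (by omega) (by omega) hn₃ hn₂ hn₁
    calc phi3 (2*2) (2*1) (2*1) 2 1 1 n₁ n₂ n₃
        = phi3 (2*1) (2*1) (2*2) 1 1 2 n₃ n₂ n₁ := phi3_comm13 ..
      _ ≤ phi3 (2*e₃) (2*1) (2*2) e₃ 1 2 n₃ n₂ n₁ := h
      _ = phi3 (2*2) (2*1) (2*e₃) 2 1 e₃ n₁ n₂ n₃ := (phi3_comm13 ..).symm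
  -- raise e₂ (coordinate 2)
  have t2 : phi3 (2*2) (2*1) (2*e₃) 2 1 e₃ n₁ n₂ n₃
      ≤ phi3 (2*2) (2*e₂) (2*e₃) 2 e₂ e₃ n₁ n₂ n₃ := by
    have h := emono_chain 1 e₂ 2 e₃ (2*2) (2*e₃) n₂ n₁ n₃ le_rfl he₂ (by omega) he₃
      (by omega) (by omega) hn₂ hn₁ hn₃
    calc phi3 (2*2) (2*1) (2*e₃) 2 1 e₃ n₁ n₂ n₃
        = phi3 (2*1) (2*2) (2*e₃) 1 2 e₃ n₂ n₁ n₃ := phi3_comm12 ..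
      _ ≤ phi3 (2*e₂) (2*2) (2*e₃) e₂ 2 e₃ n₂ n₁ n₃ := h
      _ = phi3 (2*2) (2*e₂) (2*e₃) 2 e₂ e₃ n₁ n₂ n₃ := (phi3_comm12 ..).symm
  -- raise e₁ from 2 (coordinate 1)
  have t1 : phi3 (2*2) (2*e₂) (2*e₃) 2 e₂ e₃ n₁ n₂ n₃
      ≤ phi3 (2*e₁) (2*e₂) (2*e₃) e₁ e₂ e₃ n₁ n₂ n₃ :=
    emono_chain 2 e₁ e₂ e₃ (2*e₂) (2*e₃) n₁ n₂ n₃ (by omega) h2 he₂ he₃ le_rfl le_rfl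
      hn₁ hn₂ hn₃
  -- raise d's
  have u1 : phi3 (2*e₁) (2*e₂) (2*e₃) e₁ e₂ e₃ n₁ n₂ n₃
      ≤ phi3 d₁ (2*e₂) (2*e₃) e₁ e₂ e₃ n₁ n₂ n₃ :=
    dmono_chain (2*e₁) d₁ (2*e₂) (2*e₃) e₁ e₂ e₃ n₁ n₂ n₃ le_rfl hd₁ hn₁
  have u2 : phi3 d₁ (2*e₂) (2*e₃) e₁ e₂ e₃ n₁ n₂ n₃
      ≤ phi3 d₁ d₂ (2*e₃) e₁ e₂ e₃ n₁ n₂ n₃ := by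
    have h := dmono_chain (2*e₂) d₂ d₁ (2*e₃) e₂ e₁ e₃ n₂ n₁ n₃ le_rfl hd₂ hn₂
    calc phi3 d₁ (2*e₂) (2*e₃) e₁ e₂ e₃ n₁ n₂ n₃
        = phi3 (2*e₂) d₁ (2*e₃) e₂ e₁ e₃ n₂ n₁ n₃ := phi3_comm12 ..
      _ ≤ phi3 d₂ d₁ (2*e₃) e₂ e₁ e₃ n₂ n₁ n₃ := h
      _ = phi3 d₁ d₂ (2*e₃) e₁ e₂ e₃ n₁ n₂ n₃ := (phi3_comm12 ..).symm
  have u3 : phi3 d₁ d₂ (2*e₃) e₁ e₂ e₃ n₁ n₂ n₃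
      ≤ phi3 d₁ d₂ d₃ e₁ e₂ e₃ n₁ n₂ n₃ := by
    have h := dmono_chain (2*e₃) d₃ d₂ d₁ e₃ e₂ e₁ n₃ n₂ n₁ le_rfl hd₃ hn₃
    calc phi3 d₁ d₂ (2*e₃) e₁ e₂ e₃ n₁ n₂ n₃
        = phi3 (2*e₃) d₂ d₁ e₃ e₂ e₁ n₃ n₂ n₁ := phi3_comm13 ..
      _ ≤ phi3 d₃ d₂ d₁ e₃ e₂ e₁ n₃ n₂ n₁ := h
      _ = phi3 d₁ d₂ d₃ e₁ e₂ e₃ n₁ n₂ n₃ := (phi3_comm13 ..).symm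
  linarith [s0, s1 ▸ t3]

lemma master_d (d₁ d₂ d₃ n₁ n₂ n₃ : ℕ) (h3 : 3 ≤ d₁) (hd₂ : 2 ≤ d₂) (hd₃ : 2 ≤ d₃)
    (hn₁ : 1 ≤ n₁) (hn₂ : 1 ≤ n₂) (hn₃ : 1 ≤ n₃) :
    0 ≤ phi3 d₁ d₂ d₃ 1 1 1 n₁ n₂ n₃ := by
  have s0 : (0:ℤ) ≤ phi3 3 2 2 1 1 1 n₁ n₂ n₃ := caseB n₁ n₂ n₃ hn₁ hn₂ hn₃
  have u2 : phi3 3 2 2 1 1 1 n₁ n₂ n₃ ≤ phi3 3 d₂ 2 1 1 1 n₁ n₂ n₃ := by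
    have h := dmono_chain 2 d₂ 3 2 1 1 1 n₂ n₁ n₃ (by omega) hd₂ hn₂
    calc phi3 3 2 2 1 1 1 n₁ n₂ n₃ = phi3 2 3 2 1 1 1 n₂ n₁ n₃ := phi3_comm12 ..
      _ ≤ phi3 d₂ 3 2 1 1 1 n₂ n₁ n₃ := h
      _ = phi3 3 d₂ 2 1 1 1 n₁ n₂ n₃ := (phi3_comm12 ..).symm
  have u3 : phi3 3 d₂ 2 1 1 1 n₁ n₂ n₃ ≤ phi3 3 d₂ d₃ 1 1 1 n₁ n₂ n₃ := by
    have h := dmono_chain 2 d₃ d₂ 3 1 1 1 n₃ n₂ n₁ (by omega) hd₃ hn₃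
    calc phi3 3 d₂ 2 1 1 1 n₁ n₂ n₃ = phi3 2 d₂ 3 1 1 1 n₃ n₂ n₁ := phi3_comm13 ..
      _ ≤ phi3 d₃ d₂ 3 1 1 1 n₃ n₂ n₁ := h
      _ = phi3 3 d₂ d₃ 1 1 1 n₁ n₂ n₃ := (phi3_comm13 ..).symm
  have u1 : phi3 3 d₂ d₃ 1 1 1 n₁ n₂ n₃ ≤ phi3 d₁ d₂ d₃ 1 1 1 n₁ n₂ n₃ :=
    dmono_chain 3 d₁ d₂ d₃ 1 1 1 n₁ n₂ n₃ (by omega) h3 hn₁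
  linarith


theorem stmt_18 (d₁ d₂ d₃ e₁ e₂ e₃ n₁ n₂ n₃ : ℕ)
    (he₁ : 1 ≤ e₁) (he₂ : 1 ≤ e₂) (he₃ : 1 ≤ e₃)
    (hd₁ : 2 * e₁ ≤ d₁) (hd₂ : 2 * e₂ ≤ d₂) (hd₃ : 2 * e₃ ≤ d₃)
    (hn₁ : 1 ≤ n₁) (hn₂ : 1 ≤ n₂) (hn₃ : 1 ≤ n₃) :
    phi3 d₁ d₂ d₃ e₁ e₂ e₃ n₁ n₂ n₃ < 0 ↔
      d₁ = 2 ∧ d₂ = 2 ∧ d₃ = 2 ∧ e₁ = 1 ∧ e₂ = 1 ∧ e₃ = 1 ∧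
        ∃ γ : ℕ, 1 ≤ γ ∧ γ ≤ 3 ∧
          ((n₁ = 1 ∧ n₂ = 1 ∧ n₃ = γ) ∨ (n₁ = 1 ∧ n₂ = γ ∧ n₃ = 1) ∨
            (n₁ = γ ∧ n₂ = 1 ∧ n₃ = 1)) := by
  constructor
  · intro h
    have E1 : e₁ = 1 := by
      by_contra hne
      exact absurd h (not_lt.2 (master_e d₁ d₂ d₃ e₁ e₂ e₃ n₁ n₂ n₃ (by omega) he₂ he₃
        hd₁ hd₂ hd₃ hn₁ hn₂ hn₃))
    have E2 : e₂ = 1 := by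
      by_contra hne
      have h0 := master_e d₂ d₁ d₃ e₂ e₁ e₃ n₂ n₁ n₃ (by omega) he₁ he₃ hd₂ hd₁ hd₃ hn₂ hn₁ hn₃
      rw [← phi3_comm12] at h0
      exact absurd h (not_lt.2 h0)
    have E3 : e₃ = 1 := by
      by_contra hne
      have h0 := master_e d₃ d₂ d₁ e₃ e₂ e₁ n₃ n₂ n₁ (by omega) he₂ he₁ hd₃ hd₂ hd₁ hn₃ hn₂ hn₁
      rw [← phi3_comm13] at h0
      exact absurd h (not_lt.2 h0)
    subst E1 E2 E3
    have D1 : d₁ = 2 := by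
      by_contra hne
      exact absurd h (not_lt.2 (master_d d₁ d₂ d₃ n₁ n₂ n₃ (by omega) (by omega) (by omega)
        hn₁ hn₂ hn₃))
    have D2 : d₂ = 2 := by
      by_contra hne
      have h0 := master_d d₂ d₁ d₃ n₂ n₁ n₃ (by omega) (by omega) (by omega) hn₂ hn₁ hn₃
      rw [← phi3_comm12] at h0
      exact absurd h (not_lt.2 h0)
    have D3 : d₃ = 2 := by
      by_contra hne
      have h0 := master_d d₃ d₂ d₁ n₃ n₂ n₁ (by omega) (by omega) (by omega) hn₃ hn₂ hn₁
      rw [← phi3_comm13] at h0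
      exact absurd h (not_lt.2 h0)
    subst D1 D2 D3
    refine ⟨rfl, rfl, rfl, rfl, rfl, rfl, ?_⟩
    rcases (caseA n₁ n₂ n₃ hn₁ hn₂ hn₃).1 h with ⟨h1, h2, h3⟩ | ⟨h1, h2, h3⟩ | ⟨h1, h2, h3⟩
    · exact ⟨n₃, hn₃, h3, Or.inl ⟨h1, h2, rfl⟩⟩
    · exact ⟨n₂, hn₂, h3, Or.inr (Or.inl ⟨h1, rfl, h2⟩)⟩
    · exact ⟨n₁, hn₁, h3, Or.inr (Or.inr ⟨rfl, h1, h2⟩)⟩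
  · rintro ⟨rfl, rfl, rfl, rfl, rfl, rfl, γ, hγ1, hγ3, hc⟩
    apply (caseA n₁ n₂ n₃ hn₁ hn₂ hn₃).2
    rcases hc with ⟨h1, h2, h3⟩ | ⟨h1, h2, h3⟩ | ⟨h1, h2, h3⟩
    · exact Or.inl ⟨h1, h2, by omega⟩
    · exact Or.inr (Or.inl ⟨h1, h3, by omega⟩)
    · exact Or.inr (Or.inr ⟨h2, h3, by omega⟩)
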